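/- Let a ≥ 2 be an integer and p ∈ (0,1) with q = 1 − p. Let Z ⊆ {1,…,a−1} be a symmetric set of reset sites, i.e., a − z ∈ Z whenever z ∈ Z, and let π : Z → ℝ_{≥0} satisfy π(z)·(p/q)^{(a−z)/2} = π(a−z)·(p/q)^{z/2} for all z ∈ Z (equivalently π(z)/π(a−z) = (q/p)^{a/2−z} when the weights are positive; when a is even the weight π(a/2) is unconstrained). Then, setting C* = (q/p)^{a/2}/(1 + (q/p)^{a/2}), for every γ ∈ (0,1): Σ_{z∈Z} π(z)·u(z;γ) = C*·Σ_{z∈Z} π(z)·s(z;γ), where u(z;γ) = Σ_{ν=1}^{a−1} A_ν(z)·f_ν(γ) and s(z;γ) = Σ_{ν=1}^{a−1} (A_ν(z)+B_ν(z))·f_ν(γ). -/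
import Mathlib


/-- Eigenvalue `λ_ν = 2√(p(1−p))·cos(πν/a)`. -/
noncomputable def lam (a : ℕ) (p : ℝ) (ν : ℕ) : ℝ :=
  2 * Real.sqrt (p * (1 - p)) * Real.cos (Real.pi * ν / a)

/-- Spectral transfer function `f_ν(γ) = λ_ν(1−γ)/(1 − λ_ν(1−γ))`. -/
noncomputable def fer (a : ℕ) (p : ℝ) (ν : ℕ) (γ : ℝ) : ℝ :=
  lam a p ν * (1 - γ) / (1 - lam a p ν * (1 - γ))

/-- Spectral coefficient `A_ν(w) = (2/a)·(q/p)^{w/2}·sin(πνw/a)·sin(πν/a)`. -/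
noncomputable def Acoef (a : ℕ) (p : ℝ) (ν w : ℕ) : ℝ :=
  (2 / a) * ((1 - p) / p) ^ ((w : ℝ) / 2) *
    Real.sin (Real.pi * ν * w / a) * Real.sin (Real.pi * ν / a)

/-- Spectral coefficient `B_ν(w) = (2/a)·(p/q)^{(a−w)/2}·sin(πν(a−w)/a)·sin(πν/a)`. -/
noncomputable def Bcoef (a : ℕ) (p : ℝ) (ν w : ℕ) : ℝ :=
  (2 / a) * (p / (1 - p)) ^ (((a : ℝ) - w) / 2) *
    Real.sin (Real.pi * ν * ((a : ℝ) - w) / a) * Real.sin (Real.pi * ν / a)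

/-- Discounted first-cycle ruin probability `u(z;γ) = Σ_ν A_ν(z)·f_ν(γ)`. -/
noncomputable def usum (a : ℕ) (p : ℝ) (z : ℕ) (γ : ℝ) : ℝ :=
  ∑ ν ∈ Finset.Icc 1 (a - 1), Acoef a p ν z * fer a p ν γ

/-- Discounted first-cycle absorption probability
`s(z;γ) = Σ_ν (A_ν(z)+B_ν(z))·f_ν(γ)`. -/
noncomputable def ssum (a : ℕ) (p : ℝ) (z : ℕ) (γ : ℝ) : ℝ :=
  ∑ ν ∈ Finset.Icc 1 (a - 1), (Acoef a p ν z + Bcoef a p ν z) * fer a p ν γ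

/-- critical reset distributions on a symmetric site set make
the coupling constant equal to `C* = (q/p)^{a/2}/(1+(q/p)^{a/2})` for every
resetting rate `γ`. -/
theorem stmt_15 (a : ℕ) (ha : 2 ≤ a) (p : ℝ) (hp : p ∈ Set.Ioo (0 : ℝ) 1)
    (Z : Finset ℕ) (hZ : Z ⊆ Finset.Icc 1 (a - 1))
    (hsym : ∀ z ∈ Z, a - z ∈ Z)
    (π : ℕ → ℝ) (hπ : ∀ z ∈ Z, 0 ≤ π z)
    (hbal : ∀ z ∈ Z,
      π z * (p / (1 - p)) ^ (((a : ℝ) - z) / 2) =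
        π (a - z) * (p / (1 - p)) ^ ((z : ℝ) / 2)) :
    ∀ γ ∈ Set.Ioo (0 : ℝ) 1,
      ∑ z ∈ Z, π z * usum a p z γ =
        (((1 - p) / p) ^ ((a : ℝ) / 2) / (1 + ((1 - p) / p) ^ ((a : ℝ) / 2))) *
          ∑ z ∈ Z, π z * ssum a p z γ := by
  intro γ hγ
  obtain ⟨hp0, hp1⟩ := hp
  have hq0 : (0:ℝ) < 1 - p := by linarith
  set r : ℝ := (1 - p) / p with hr_def
  have hr : 0 < r := div_pos hq0 hp0
  set C : ℝ := r ^ ((a:ℝ)/2) with hC_def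
  have hC : 0 < C := Real.rpow_pos_of_pos hr _
  -- pointwise key identity
  have key : ∀ z ∈ Z, ∀ ν : ℕ,
      C * (π z * Bcoef a p ν z) = π (a - z) * Acoef a p ν (a - z) := by
    intro z hz ν
    have hz' := Finset.mem_Icc.mp (hZ hz)
    have hza : z ≤ a := le_trans hz'.2 (Nat.sub_le a 1)
    have hcast : ((a - z : ℕ) : ℝ) = (a:ℝ) - z := by
      push_cast [Nat.cast_sub hza]; ring
    have hinv : (p / (1 - p)) * r = 1 := by
      rw [hr_def]; field_simp
    have hpow : (p / (1-p)) ^ ((z:ℝ)/2) * C = r ^ (((a:ℝ)-z)/2) := by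
      have h1 : ((z:ℝ)/2) + (((a:ℝ)-z)/2) = (a:ℝ)/2 := by ring
      have h2 : (p / (1-p)) ^ ((z:ℝ)/2) * r ^ ((z:ℝ)/2) = 1 := by
        rw [← Real.mul_rpow (by positivity) hr.le, hinv, Real.one_rpow]
      calc (p/(1-p)) ^ ((z:ℝ)/2) * C
          = (p/(1-p)) ^ ((z:ℝ)/2) * (r ^ ((z:ℝ)/2) * r ^ (((a:ℝ)-z)/2)) := by
            rw [hC_def, ← Real.rpow_add hr, h1]
        _ = ((p/(1-p)) ^ ((z:ℝ)/2) * r ^ ((z:ℝ)/2)) * r ^ (((a:ℝ)-z)/2) := by ring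
        _ = r ^ (((a:ℝ)-z)/2) := by rw [h2, one_mul]
    have hb := hbal z hz
    have main : π z * (C * (p/(1-p)) ^ (((a:ℝ)-z)/2)) = π (a-z) * r ^ (((a:ℝ)-z)/2) := by
      calc π z * (C * (p/(1-p)) ^ (((a:ℝ)-z)/2))
          = (π z * (p/(1-p)) ^ (((a:ℝ)-z)/2)) * C := by ring
        _ = (π (a-z) * (p/(1-p)) ^ ((z:ℝ)/2)) * C := by rw [hb]
        _ = π (a-z) * ((p/(1-p)) ^ ((z:ℝ)/2) * C) := by ring
        _ = π (a-z) * r ^ (((a:ℝ)-z)/2) := by rw [hpow]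
    simp only [Acoef, Bcoef, hcast, ← hr_def]
    linear_combination ((2 / (a:ℝ)) * Real.sin (Real.pi * ν * ((a:ℝ)-z) / a)
      * Real.sin (Real.pi * ν / a)) * main
  -- key identity summed over ν
  have hUV : ∀ z ∈ Z,
      C * (π z * ∑ ν ∈ Finset.Icc 1 (a-1), Bcoef a p ν z * fer a p ν γ)
        = π (a - z) * usum a p (a - z) γ := by
    intro z hz
    unfold usum
    simp only [Finset.mul_sum]
    refine Finset.sum_congr rfl fun ν _ => ?_
    linear_combination fer a p ν γ * key z hz ν
  -- reindexing by the involution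
  have hre : ∑ z ∈ Z, π (a - z) * usum a p (a - z) γ = ∑ z ∈ Z, π z * usum a p z γ := by
    refine Finset.sum_nbij' (fun z => a - z) (fun z => a - z)
      (fun z hz => hsym z hz) (fun z hz => hsym z hz) ?_ ?_ (fun z hz => rfl)
    · intro z hz
      have hz' := Finset.mem_Icc.mp (hZ hz)
      have hza : z ≤ a := le_trans hz'.2 (Nat.sub_le a 1)
      exact Nat.sub_sub_self hza
    · intro z hz
      have hz' := Finset.mem_Icc.mp (hZ hz)
      have hza : z ≤ a := le_trans hz'.2 (Nat.sub_le a 1)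
      exact Nat.sub_sub_self hza
  -- main linear relation
  have hU : ∑ z ∈ Z, π z * usum a p z γ
      = C * ∑ z ∈ Z, π z * (∑ ν ∈ Finset.Icc 1 (a-1), Bcoef a p ν z * fer a p ν γ) := by
    rw [Finset.mul_sum, ← hre]
    exact (Finset.sum_congr rfl fun z hz => (hUV z hz).symm)
  have hS : ∑ z ∈ Z, π z * ssum a p z γ
      = ∑ z ∈ Z, π z * usum a p z γ
        + ∑ z ∈ Z, π z * (∑ ν ∈ Finset.Icc 1 (a-1), Bcoef a p ν z * fer a p ν γ) := by
    rw [← Finset.sum_add_distrib]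
    refine Finset.sum_congr rfl fun z hz => ?_
    unfold ssum usum
    rw [← mul_add, ← Finset.sum_add_distrib]
    congr 1
    refine Finset.sum_congr rfl fun ν _ => ?_
    ring
  set V := ∑ z ∈ Z, π z * (∑ ν ∈ Finset.Icc 1 (a-1), Bcoef a p ν z * fer a p ν γ)
  rw [hS, hU]
  have h1C : (1 : ℝ) + C ≠ 0 := by positivity
  field_simp
  ring
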